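/- arXiv:2311.15602 — 4 statements merged into one kernel-verified Lean document; each statement's English description precedes it below -/
import Mathlib

section
/- Let N ≥ 1, κ ≥ 0, and let d ∈ ℝ^N have nonnegative entries; define the diagonal bilinear form s(v,w) = Σᵢ dᵢ vᵢ wᵢ on ℝ^N, and let K = {w ∈ ℝ^N : 0 ≤ wᵢ ≤ κ for all i}. Then for every v ∈ ℝ^N and every w ∈ K, s(v⁻, w − v⁺) ≤ 0. -/
open scoped BigOperators

/-- Componentwise clipping to `[0, κ]`. -/
noncomputable def clipv {N : ℕ} (κ : ℝ) (v : Fin N → ℝ) : Fin N → ℝ :=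
  fun i => max 0 (min (v i) κ)

/-- sign property of the diagonal stabilising form against the admissible
box `K = {w : 0 ≤ wᵢ ≤ κ}` : `s(v⁻, w − v⁺) ≤ 0` for all `v` and all `w ∈ K`. -/
theorem stab_sign (N : ℕ) (hN : 1 ≤ N) (κ : ℝ) (hκ : 0 ≤ κ)
    (d : Fin N → ℝ) (hd : ∀ i, 0 ≤ d i)
    (s : (Fin N → ℝ) → (Fin N → ℝ) → ℝ)
    (hs : ∀ v w : Fin N → ℝ, s v w = ∑ i, d i * v i * w i) :
    ∀ v w : Fin N → ℝ, (∀ i, 0 ≤ w i ∧ w i ≤ κ) →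
      s (v - clipv κ v) (w - clipv κ v) ≤ 0 := by
  intro v w hw
  rw [hs]
  apply Finset.sum_nonpos
  intro i _
  obtain ⟨hw0, hwκ⟩ := hw i
  simp only [Pi.sub_apply, clipv]
  rcases le_or_gt (v i) 0 with h0 | h0
  · have hc : max 0 (min (v i) κ) = 0 := by
      simp [max_eq_left, min_le_of_left_le h0]
    rw [hc]
    have : d i * (v i - 0) ≤ 0 := mul_nonpos_of_nonneg_of_nonpos (hd i) (by linarith)
    nlinarith
  · rcases le_or_gt (v i) κ with h1 | h1
    · have hc : max 0 (min (v i) κ) = v i := by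
        rw [min_eq_left h1, max_eq_right h0.le]
      rw [hc]; simp
    · have hc : max 0 (min (v i) κ) = κ := by
        rw [min_eq_right h1.le, max_eq_right hκ]
      rw [hc]
      have h2 : d i * (v i - κ) ≥ 0 := mul_nonneg (hd i) (by linarith)
      nlinarith
end

section
/- Let N ≥ 1, κ ≥ 0, and let ã be a bilinear form on ℝ^N satisfying ã(v,v) ≥ c‖v‖² for all v (with c > 0) and |ã(v,w)| ≤ M‖v‖‖w‖ for all v, w (with M ≥ 0), where ‖·‖ is the Euclidean norm. Let d ∈ ℝ^N have entries dᵢ ≥ σ with σ > M²/(2c), and define s(v,w) = Σᵢ dᵢ vᵢ wᵢ. Then there exists a constant C > 0 such that for all v, w ∈ ℝ^N, ã(v⁺ − w⁺, v − w) + s(v⁻ − w⁻, v − w) ≥ C‖v − w‖². -/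
open scoped BigOperators

/-- Componentwise clipping to `[0, κ]` on Euclidean space. -/
noncomputable def clipE {N : ℕ} (κ : ℝ) (v : EuclideanSpace ℝ (Fin N)) :
    EuclideanSpace ℝ (Fin N) :=
  WithLp.toLp 2 (fun i => max 0 (min (v i) κ))

/-! Clipping `x ↦ x⁺` and its residual `x ↦ x - x⁺` are both monotone, so the increments
`v⁺ - w⁺` and `v⁻ - w⁻` have the same sign in every coordinate. This makes the stabilising
term `s(v⁻ - w⁻, v - w)` at least `σ ‖v⁻ - w⁻‖²`, and the defect of coercivity in
`ã(v⁺ - w⁺, v - w)`, at most `M ‖v⁺ - w⁺‖ ‖v⁻ - w⁻‖`, is absorbed by Young's inequality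
as soon as `σ > M² / (2c)`. -/

lemma monotone_clip (κ : ℝ) : Monotone fun x : ℝ => max 0 (min x κ) :=
  monotone_const.max (monotone_id.min monotone_const)

lemma monotone_sub_clip (κ : ℝ) : Monotone fun x : ℝ => x - max 0 (min x κ) := by
  intro x y hxy
  simp only [max_def, min_def]
  split_ifs <;> linarith

lemma clipE_sub_mul_sub_nonneg {N : ℕ} (κ : ℝ) (v w : EuclideanSpace ℝ (Fin N)) (i : Fin N) :
    0 ≤ (clipE κ v - clipE κ w) i * ((v - clipE κ v) - (w - clipE κ w)) i :=
  ((monotone_clip κ).monovary (monotone_sub_clip κ)).sub_mul_sub_nonneg (w i) (v i)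

lemma mul_norm_sq_le_sum_mul_add {N : ℕ} {d : Fin N → ℝ} {σ : ℝ} (hσ : 0 ≤ σ)
    (hd : ∀ i, σ ≤ d i) {p q : EuclideanSpace ℝ (Fin N)} (hpq : ∀ i, 0 ≤ p i * q i) :
    σ * ‖q‖ ^ 2 ≤ ∑ i, d i * q i * (p + q) i := by
  rw [EuclideanSpace.real_norm_sq_eq, Finset.mul_sum]
  refine Finset.sum_le_sum fun i _ => ?_
  have hdi : 0 ≤ d i := hσ.trans (hd i)
  calc σ * q i ^ 2 ≤ d i * q i ^ 2 := by gcongr; exact hd i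
    _ ≤ d i * q i ^ 2 + d i * (p i * q i) := le_add_of_nonneg_right (mul_nonneg hdi (hpq i))
    _ = d i * q i * (p + q) i := by rw [PiLp.add_apply]; ring

lemma min_mul_sq_add_sq_le {c : ℝ} (hc : 0 < c) (M σ a b : ℝ) :
    min (c / 2) (σ - M ^ 2 / (2 * c)) * (a ^ 2 + b ^ 2) ≤ c * a ^ 2 - M * a * b + σ * b ^ 2 := by
  set ε := min (c / 2) (σ - M ^ 2 / (2 * c))
  have young : M * a * b ≤ c / 2 * a ^ 2 + M ^ 2 / (2 * c) * b ^ 2 := by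
    have hexpand :
        2 * c * (c / 2 * a ^ 2 + M ^ 2 / (2 * c) * b ^ 2) = (c * a) ^ 2 + (M * b) ^ 2 := by
      field_simp
    refine le_of_mul_le_mul_left ?_ (by positivity : 0 < 2 * c)
    rw [hexpand]
    nlinarith [sq_nonneg (c * a - M * b)]
  have h₁ : ε * a ^ 2 ≤ c / 2 * a ^ 2 := by gcongr; exact min_le_left _ _
  have h₂ : ε * b ^ 2 ≤ (σ - M ^ 2 / (2 * c)) * b ^ 2 := by gcongr; exact min_le_right _ _
  linarith

lemma min_div_two_mul_norm_add_sq_le {E : Type*} [SeminormedAddCommGroup E] [Module ℝ E]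
    (A : E →ₗ[ℝ] E →ₗ[ℝ] ℝ) {c M σ : ℝ} (hc : 0 < c) (hσ : M ^ 2 / (2 * c) ≤ σ)
    (hcoer : ∀ v, c * ‖v‖ ^ 2 ≤ A v v) (hbound : ∀ v w, |A v w| ≤ M * ‖v‖ * ‖w‖) (p q : E) :
    min (c / 2) (σ - M ^ 2 / (2 * c)) / 2 * ‖p + q‖ ^ 2 ≤ A p (p + q) + σ * ‖q‖ ^ 2 := by
  set ε := min (c / 2) (σ - M ^ 2 / (2 * c))
  have hε : 0 ≤ ε := le_min (by positivity) (sub_nonneg.2 hσ)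
  have hA : c * ‖p‖ ^ 2 - M * ‖p‖ * ‖q‖ ≤ A p (p + q) := by
    rw [map_add]
    linarith [hcoer p, neg_le_of_abs_le (hbound p q)]
  calc ε / 2 * ‖p + q‖ ^ 2
      ≤ ε / 2 * (2 * (‖p‖ ^ 2 + ‖q‖ ^ 2)) := by
        gcongr
        exact (pow_le_pow_left₀ (norm_nonneg _) (norm_add_le p q) 2).trans add_sq_le
    _ = ε * (‖p‖ ^ 2 + ‖q‖ ^ 2) := by ring
    _ ≤ c * ‖p‖ ^ 2 - M * ‖p‖ * ‖q‖ + σ * ‖q‖ ^ 2 := min_mul_sq_add_sq_le hc M σ _ _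
    _ ≤ A p (p + q) + σ * ‖q‖ ^ 2 := by linarith

theorem clipped_strong_monotone_general (N : ℕ) (κ : ℝ)
    (A : EuclideanSpace ℝ (Fin N) →ₗ[ℝ] EuclideanSpace ℝ (Fin N) →ₗ[ℝ] ℝ)
    (c M : ℝ) (hc : 0 < c)
    (hcoer : ∀ v : EuclideanSpace ℝ (Fin N), c * ‖v‖ ^ 2 ≤ A v v)
    (hbound : ∀ v w : EuclideanSpace ℝ (Fin N), |A v w| ≤ M * ‖v‖ * ‖w‖)
    (d : Fin N → ℝ) (σ : ℝ) (hσ : M ^ 2 / (2 * c) < σ) (hd : ∀ i, σ ≤ d i)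
    (s : EuclideanSpace ℝ (Fin N) → EuclideanSpace ℝ (Fin N) → ℝ)
    (hs : ∀ v w : EuclideanSpace ℝ (Fin N), s v w = ∑ i, d i * v i * w i) :
    ∃ C : ℝ, 0 < C ∧ ∀ v w : EuclideanSpace ℝ (Fin N),
      C * ‖v - w‖ ^ 2 ≤
        A (clipE κ v - clipE κ w) (v - w)
          + s ((v - clipE κ v) - (w - clipE κ w)) (v - w) := by
  have hσ₀ : 0 ≤ σ := (by positivity : 0 ≤ M ^ 2 / (2 * c)).trans hσ.le
  refine ⟨min (c / 2) (σ - M ^ 2 / (2 * c)) / 2,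
    half_pos (lt_min (half_pos hc) (sub_pos.2 hσ)), fun v w => ?_⟩
  set p := clipE κ v - clipE κ w
  set q := (v - clipE κ v) - (w - clipE κ w)
  have hpq : v - w = p + q := by simp only [p, q]; abel
  rw [hs, hpq]
  calc _ ≤ A p (p + q) + σ * ‖q‖ ^ 2 :=
        min_div_two_mul_norm_add_sq_le A hc hσ.le hcoer hbound p q
    _ ≤ _ := by
      gcongr
      exact mul_norm_sq_le_sum_mul_add hσ₀ hd (clipE_sub_mul_sub_nonneg κ v w)

/-- strong monotonicity of the clipped operator: if `ã` is coercive with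
constant `c` and bounded with constant `M`, and the diagonal weights satisfy
`dᵢ ≥ σ > M²/(2c)`, then there is `C > 0` with
`ã(v⁺ − w⁺, v − w) + s(v⁻ − w⁻, v − w) ≥ C ‖v − w‖²`. -/
theorem clipped_strong_monotone (N : ℕ) (hN : 1 ≤ N) (κ : ℝ) (hκ : 0 ≤ κ)
    (A : EuclideanSpace ℝ (Fin N) →ₗ[ℝ] EuclideanSpace ℝ (Fin N) →ₗ[ℝ] ℝ)
    (c M : ℝ) (hc : 0 < c) (hM : 0 ≤ M)
    (hcoer : ∀ v : EuclideanSpace ℝ (Fin N), c * ‖v‖ ^ 2 ≤ A v v)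
    (hbound : ∀ v w : EuclideanSpace ℝ (Fin N), |A v w| ≤ M * ‖v‖ * ‖w‖)
    (d : Fin N → ℝ) (σ : ℝ) (hσ : M ^ 2 / (2 * c) < σ) (hd : ∀ i, σ ≤ d i)
    (s : EuclideanSpace ℝ (Fin N) → EuclideanSpace ℝ (Fin N) → ℝ)
    (hs : ∀ v w : EuclideanSpace ℝ (Fin N), s v w = ∑ i, d i * v i * w i) :
    ∃ C : ℝ, 0 < C ∧ ∀ v w : EuclideanSpace ℝ (Fin N),
      C * ‖v - w‖ ^ 2 ≤
        A (clipE κ v - clipE κ w) (v - w)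
          + s ((v - clipE κ v) - (w - clipE κ w)) (v - w) :=
  clipped_strong_monotone_general N κ A c M hc hcoer hbound d σ hσ hd s hs
end

section
/- Let N ≥ 1, κ ≥ 0, let ã and B be bilinear forms on ℝ^N with |B(x,y)| ≤ M_B‖x‖‖y‖ for all x, y (M_B ≥ 0), let d ∈ ℝ^N have nonnegative entries defining s(v,w) = Σᵢ dᵢ vᵢ wᵢ, and assume there exists c > 0 such that ã(v⁺ − w⁺, v − w) + s(v⁻ − w⁻, v − w) ≥ c‖v − w‖² for all v, w ∈ ℝ^N, where ‖·‖ is the Euclidean norm. Let f : ℝ^N → ℝ be linear. If v̂, ŵ ∈ ℝ^N and z, w ∈ ℝ^N satisfy ã(z⁺, v) + s(z⁻, v) = f(v) − B(v̂⁺, v) for all v and ã(w⁺, v) + s(w⁻, v) = f(v) − B(ŵ⁺, v) for all v, then ‖z − w‖ ≤ (M_B/c)‖v̂ − ŵ‖. -/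
open scoped BigOperators

/-!
Test the two equations with `u = z - w` and subtract: the left-hand sides give exactly the
monotonicity form at `(z, w)`, which is at least `c ‖u‖²`, while the right-hand sides give
`B (ŵ⁺ - v̂⁺, u) ≤ M_B ‖ŵ⁺ - v̂⁺‖ ‖u‖ ≤ M_B ‖v̂ - ŵ‖ ‖u‖`, the clipping being 1-Lipschitz
coordinatewise and hence in the Euclidean norm. Dividing by `c ‖u‖` gives the bound.
-/

lemma EuclideanSpace.lipschitzWith_one_map {ι : Type*} [Fintype ι] {φ : ℝ → ℝ}
    (hφ : LipschitzWith 1 φ) :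
    LipschitzWith 1 (fun v : EuclideanSpace ℝ ι => WithLp.toLp 2 (fun i => φ (v i))) := by
  refine LipschitzWith.of_dist_le_mul fun a b => ?_
  simp only [NNReal.coe_one, one_mul, EuclideanSpace.dist_eq]
  gcongr with i
  simpa using hφ.dist_le_mul (a i) (b i)

lemma lipschitzWith_clipE {N : ℕ} (κ : ℝ) : LipschitzWith 1 (clipE (N := N) κ) :=
  EuclideanSpace.lipschitzWith_one_map (φ := fun t => max 0 (min t κ))
    ((LipschitzWith.id.min_const κ).const_max 0)

lemma norm_clipE_sub_clipE_le {N : ℕ} (κ : ℝ) (a b : EuclideanSpace ℝ (Fin N)) :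
    ‖clipE κ a - clipE κ b‖ ≤ ‖a - b‖ := by
  simpa [dist_eq_norm] using (lipschitzWith_clipE κ).dist_le_mul a b

lemma diagonal_form_sub_left {ι : Type*} [Fintype ι] {d : ι → ℝ}
    {s : EuclideanSpace ℝ ι → EuclideanSpace ℝ ι → ℝ}
    (hs : ∀ v w : EuclideanSpace ℝ ι, s v w = ∑ i, d i * v i * w i)
    (a b v : EuclideanSpace ℝ ι) : s (a - b) v = s a v - s b v := by
  simp only [hs, ← Finset.sum_sub_distrib, PiLp.sub_apply]
  exact Finset.sum_congr rfl fun i _ => by ring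

lemma le_div_of_mul_sq_le_mul {c K x : ℝ} (hc : 0 < c) (hK : 0 ≤ K) (hx : 0 ≤ x)
    (h : c * x ^ 2 ≤ K * x) : x ≤ K / c := by
  rw [le_div_iff₀ hc]
  rcases hx.eq_or_lt with rfl | hx
  · simpa using hK
  · nlinarith

theorem fixed_point_map_lipschitz_general (N : ℕ) (κ : ℝ)
    (A B : EuclideanSpace ℝ (Fin N) →ₗ[ℝ] EuclideanSpace ℝ (Fin N) →ₗ[ℝ] ℝ)
    (MB : ℝ) (hMB : 0 ≤ MB)
    (hB : ∀ x y : EuclideanSpace ℝ (Fin N), |B x y| ≤ MB * ‖x‖ * ‖y‖)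
    (d : Fin N → ℝ)
    (s : EuclideanSpace ℝ (Fin N) → EuclideanSpace ℝ (Fin N) → ℝ)
    (hs : ∀ v w : EuclideanSpace ℝ (Fin N), s v w = ∑ i, d i * v i * w i)
    (c : ℝ) (hc : 0 < c)
    (hmono : ∀ v w : EuclideanSpace ℝ (Fin N),
      c * ‖v - w‖ ^ 2 ≤
        A (clipE κ v - clipE κ w) (v - w)
          + s ((v - clipE κ v) - (w - clipE κ w)) (v - w))
    (f : EuclideanSpace ℝ (Fin N) →ₗ[ℝ] ℝ)
    (vhat what z w : EuclideanSpace ℝ (Fin N))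
    (hz : ∀ v : EuclideanSpace ℝ (Fin N),
      A (clipE κ z) v + s (z - clipE κ z) v = f v - B (clipE κ vhat) v)
    (hw : ∀ v : EuclideanSpace ℝ (Fin N),
      A (clipE κ w) v + s (w - clipE κ w) v = f v - B (clipE κ what) v) :
    ‖z - w‖ ≤ (MB / c) * ‖vhat - what‖ := by
  have hdiff : A (clipE κ z - clipE κ w) (z - w) + s ((z - clipE κ z) - (w - clipE κ w)) (z - w)
      = B (clipE κ what - clipE κ vhat) (z - w) := by
    rw [map_sub A, LinearMap.sub_apply, diagonal_form_sub_left hs (z - clipE κ z), map_sub B,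
      LinearMap.sub_apply]
    linarith [hz (z - w), hw (z - w)]
  have hcoercive : c * ‖z - w‖ ^ 2 ≤ (MB * ‖vhat - what‖) * ‖z - w‖ :=
    calc c * ‖z - w‖ ^ 2 ≤ B (clipE κ what - clipE κ vhat) (z - w) := hdiff ▸ hmono z w
      _ ≤ MB * ‖clipE κ what - clipE κ vhat‖ * ‖z - w‖ := (le_abs_self _).trans (hB _ _)
      _ ≤ MB * ‖what - vhat‖ * ‖z - w‖ := by gcongr; exact norm_clipE_sub_clipE_le κ _ _
      _ = (MB * ‖vhat - what‖) * ‖z - w‖ := by rw [norm_sub_rev]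
  rw [div_mul_eq_mul_div]
  exact le_div_of_mul_sq_le_mul hc (by positivity) (norm_nonneg _) hcoercive

/-- Lipschitz continuity of the fixed-point map: if `z` and `w` solve the
monotone clipped problems with data shifted by the convective form evaluated at `vhat⁺`
and `what⁺` respectively, then `‖z − w‖ ≤ (M_B / c) ‖vhat − what‖`. -/
theorem fixed_point_map_lipschitz (N : ℕ) (hN : 1 ≤ N) (κ : ℝ) (hκ : 0 ≤ κ)
    (A B : EuclideanSpace ℝ (Fin N) →ₗ[ℝ] EuclideanSpace ℝ (Fin N) →ₗ[ℝ] ℝ)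
    (MB : ℝ) (hMB : 0 ≤ MB)
    (hB : ∀ x y : EuclideanSpace ℝ (Fin N), |B x y| ≤ MB * ‖x‖ * ‖y‖)
    (d : Fin N → ℝ) (hd : ∀ i, 0 ≤ d i)
    (s : EuclideanSpace ℝ (Fin N) → EuclideanSpace ℝ (Fin N) → ℝ)
    (hs : ∀ v w : EuclideanSpace ℝ (Fin N), s v w = ∑ i, d i * v i * w i)
    (c : ℝ) (hc : 0 < c)
    (hmono : ∀ v w : EuclideanSpace ℝ (Fin N),
      c * ‖v - w‖ ^ 2 ≤
        A (clipE κ v - clipE κ w) (v - w)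
          + s ((v - clipE κ v) - (w - clipE κ w)) (v - w))
    (f : EuclideanSpace ℝ (Fin N) →ₗ[ℝ] ℝ)
    (vhat what z w : EuclideanSpace ℝ (Fin N))
    (hz : ∀ v : EuclideanSpace ℝ (Fin N),
      A (clipE κ z) v + s (z - clipE κ z) v = f v - B (clipE κ vhat) v)
    (hw : ∀ v : EuclideanSpace ℝ (Fin N),
      A (clipE κ w) v + s (w - clipE κ w) v = f v - B (clipE κ what) v) :
    ‖z - w‖ ≤ (MB / c) * ‖vhat - what‖ :=
  fixed_point_map_lipschitz_general N κ A B MB hMB hB d s hs c hc hmono f vhat what z w hz hw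
end

section
/- Let N ≥ 1, κ ≥ 0, let a be a bilinear form on ℝ^N, let d ∈ ℝ^N have nonnegative entries defining s(v,w) = Σᵢ dᵢ vᵢ wᵢ, let f : ℝ^N → ℝ be linear, and let K = {v ∈ ℝ^N : 0 ≤ vᵢ ≤ κ for all i}. If u ∈ ℝ^N satisfies a(u⁺, v) + s(u⁻, v) = f(v) for all v ∈ ℝ^N, then u⁺ ∈ K and u⁺ solves the variational inequality a(u⁺, v − u⁺) ≥ f(v − u⁺) for all v ∈ K. -/
open scoped BigOperators

/-- if `u` solves `a(u⁺, v) + s(u⁻, v) = f(v)` for all `v`, then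
`u⁺` lies in the box `K = {v : 0 ≤ vᵢ ≤ κ}` and solves the variational inequality
`a(u⁺, v − u⁺) ≥ f(v − u⁺)` for all `v ∈ K`. -/
theorem bpm_variational_inequality (N : ℕ) (hN : 1 ≤ N) (κ : ℝ) (hκ : 0 ≤ κ)
    (a : (Fin N → ℝ) →ₗ[ℝ] (Fin N → ℝ) →ₗ[ℝ] ℝ)
    (d : Fin N → ℝ) (hd : ∀ i, 0 ≤ d i)
    (s : (Fin N → ℝ) → (Fin N → ℝ) → ℝ)
    (hs : ∀ v w : Fin N → ℝ, s v w = ∑ i, d i * v i * w i)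
    (f : (Fin N → ℝ) →ₗ[ℝ] ℝ)
    (u : Fin N → ℝ)
    (hu : ∀ v : Fin N → ℝ, a (clipv κ u) v + s (u - clipv κ u) v = f v) :
    (∀ i, 0 ≤ clipv κ u i ∧ clipv κ u i ≤ κ) ∧
      ∀ v : Fin N → ℝ, (∀ i, 0 ≤ v i ∧ v i ≤ κ) →
        f (v - clipv κ u) ≤ a (clipv κ u) (v - clipv κ u) := by
  constructor
  · intro i
    constructor
    · exact le_max_left _ _
    · exact max_le hκ (min_le_right _ _)
  · intro v hv
    have key : s (u - clipv κ u) (v - clipv κ u) ≤ 0 := by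
      rw [hs]
      apply Finset.sum_nonpos
      intro i _
      have hterm : (u i - clipv κ u i) * (v i - clipv κ u i) ≤ 0 := by
        simp only [clipv]
        rcases le_or_gt (u i) 0 with h | h
        · rw [min_eq_left (h.trans hκ), max_eq_left h]
          exact mul_nonpos_of_nonpos_of_nonneg (by linarith)
            (by simpa using (hv i).1)
        · rcases le_or_gt κ (u i) with h2 | h2
          · rw [min_eq_right h2, max_eq_right hκ]
            exact mul_nonpos_of_nonneg_of_nonpos (by linarith) (by linarith [(hv i).2])
          · rw [min_eq_left h2.le, max_eq_right h.le]
            simp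
      have := hd i
      simp only [Pi.sub_apply] at hterm ⊢
      calc d i * (u i - clipv κ u i) * (v i - clipv κ u i)
          = d i * ((u i - clipv κ u i) * (v i - clipv κ u i)) := by ring
        _ ≤ 0 := mul_nonpos_of_nonneg_of_nonpos this hterm
    have := hu (v - clipv κ u)
    linarith
end
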